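/- Let $m \ge 2$ be an integer and let $b_1, \dots, b_m$ be real numbers with $\sum_{i=1}^m b_i = 0$. Then $\sum_{i=1}^m b_i^3 = \frac{m-2}{\sqrt{m(m-1)}}\left(\sum_{i=1}^m b_i^2\right)^{3/2}$ if and only if there exist an index $j \in \{1,\dots,m\}$ and a real number $b \le 0$ such that $b_i = b$ for all $i \ne j$; similarly, $\sum_{i=1}^m b_i^3 = -\frac{m-2}{\sqrt{m(m-1)}}\left(\sum_{i=1}^m b_i^2\right)^{3/2}$ if and only if there exist an index $j$ and a real number $b \ge 0$ such that $b_i = b$ for all $i \ne j$. -/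

import Mathlib

/-!
Put `n = m` and `t = √(∑ bᵢ² / (n (n - 1)))`, so that the claimed bound is
`n (n - 1) (n - 2) t³`.
Since `∑ bᵢ = 0`, Cauchy–Schwarz on the other `n - 1` entries gives `bᵢ ≤ (n - 1) t`, and
expanding with `∑ bᵢ = 0`, `∑ bᵢ² = n (n - 1) t²` yields
`∑ (bᵢ + t)² (bᵢ - (n - 1) t) = ∑ bᵢ³ - n (n - 1) (n - 2) t³`.
Every summand on the left is `≤ 0`, so equality holds iff each `bᵢ` is `-t` or `(n - 1) t`;
the numbers `bᵢ + t ∈ {0, n t}` add up to `n t`, so at most one of them is non-zero.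
The lower bound follows by applying this to `-b`.
-/

open Finset

section
variable {ι : Type*} [Fintype ι]

theorem Finset.cast_card_univ_erase {R : Type*} [AddGroupWithOne R] [DecidableEq ι] (i : ι) :
    ((univ.erase i).card : R) = Fintype.card ι - 1 := by
  rw [card_erase_of_mem (mem_univ i), card_univ,
    Nat.cast_sub (Fintype.card_pos_iff.mpr ⟨i⟩), Nat.cast_one]

theorem Fintype.sum_eq_add_card_sub_one_mul {R : Type*} [Ring R] (f : ι → R) (j : ι) {c : R}
    (h : ∀ i ≠ j, f i = c) : ∑ i, f i = f j + ((Fintype.card ι : R) - 1) * c := by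
  classical
  have hrest : ∑ i ∈ univ.erase j, f i = ∑ _i ∈ univ.erase j, c :=
    Finset.sum_congr rfl fun i hi => h i (ne_of_mem_erase hi)
  rw [← add_sum_erase _ _ (mem_univ j), hrest, sum_const, nsmul_eq_mul, cast_card_univ_erase]

theorem exists_forall_ne_eq_zero_of_sum_eq {K : Type*} [Field K] [CharZero K] [Nonempty ι]
    {f : ι → K} {c : K} (hf : ∀ i, f i = 0 ∨ f i = c) (hsum : ∑ i, f i = c) :
    ∃ j, ∀ i ≠ j, f i = 0 := by
  classical
  rcases eq_or_ne c 0 with rfl | hc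
  · exact ⟨Classical.arbitrary ι, fun i _ => (hf i).elim id id⟩
  have hsum_filter : ∑ i, f i = #{i | f i = c} * c := by
    rw [← sum_filter_of_ne fun i _ hi => (hf i).resolve_left hi,
      sum_congr rfl fun i hi => (mem_filter.mp hi).2, sum_const, nsmul_eq_mul]
  have hcard : #{i | f i = c} = 1 := by
    have : (#{i | f i = c} : K) = 1 :=
      mul_right_cancel₀ hc (by rw [← hsum_filter, hsum, one_mul])
    exact_mod_cast this
  obtain ⟨j, hj⟩ := card_eq_one.mp hcard
  refine ⟨j, fun i hij => (hf i).resolve_right fun hi => hij ?_⟩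
  have hi' : i ∈ ({j} : Finset ι) := hj ▸ mem_filter.mpr ⟨mem_univ i, hi⟩
  simpa using hi'

theorem sum_sq_add_mul_sub_eq {R : Type*} [CommRing R] {b : ι → R} {t : R}
    (hsum : ∑ i, b i = 0)
    (hS : ∑ i, b i ^ 2 = Fintype.card ι * (Fintype.card ι - 1) * t ^ 2) :
    ∑ i, (b i + t) ^ 2 * (b i - (Fintype.card ι - 1) * t) =
      ∑ i, b i ^ 3 - Fintype.card ι * (Fintype.card ι - 1) * (Fintype.card ι - 2) * t ^ 3 := by
  have hexpand : ∀ i, (b i + t) ^ 2 * (b i - (Fintype.card ι - 1) * t) =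
      b i ^ 3 + (3 - Fintype.card ι) * t * b i ^ 2 + (3 - 2 * Fintype.card ι) * t ^ 2 * b i
        - (Fintype.card ι - 1) * t ^ 3 := fun i => by ring
  simp only [hexpand, sum_sub_distrib, sum_add_distrib, ← mul_sum, hsum, hS, sum_const,
    card_univ, nsmul_eq_mul]
  ring

section LinearOrderedField
variable {K : Type*} [Field K] [LinearOrder K] [IsStrictOrderedRing K] {b : ι → K}

theorem card_mul_sq_le_of_sum_eq_zero (hsum : ∑ i, b i = 0) (i : ι) :
    Fintype.card ι * b i ^ 2 ≤ (Fintype.card ι - 1) * ∑ j, b j ^ 2 := by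
  classical
  have hrest : ∑ j ∈ univ.erase i, b j = -b i := by
    linear_combination add_sum_erase _ b (mem_univ i) + hsum
  have hcs := sq_sum_le_card_mul_sum_sq (s := univ.erase i) (f := b)
  rw [hrest, neg_sq, cast_card_univ_erase] at hcs
  rw [← add_sum_erase _ _ (mem_univ i)]
  linarith

theorem le_card_sub_one_mul_of_sum_eq_zero {t : K} (hsum : ∑ i, b i = 0) (ht : 0 ≤ t)
    (hS : ∑ i, b i ^ 2 = Fintype.card ι * (Fintype.card ι - 1) * t ^ 2) (i : ι) :
    b i ≤ (Fintype.card ι - 1) * t := by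
  have hn : (1 : K) ≤ Fintype.card ι := by exact_mod_cast Fintype.card_pos_iff.mpr ⟨i⟩
  have hsq : b i ^ 2 ≤ ((Fintype.card ι - 1) * t) ^ 2 := by
    have := card_mul_sq_le_of_sum_eq_zero hsum i
    rw [hS] at this
    nlinarith
  exact (abs_le_of_sq_le_sq' hsq (mul_nonneg (by linarith) ht)).2

theorem sum_pow_three_eq_iff {t : K} (hsum : ∑ i, b i = 0) (ht : 0 ≤ t)
    (hS : ∑ i, b i ^ 2 = Fintype.card ι * (Fintype.card ι - 1) * t ^ 2) :
    ∑ i, b i ^ 3 = Fintype.card ι * (Fintype.card ι - 1) * (Fintype.card ι - 2) * t ^ 3 ↔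
      ∀ i, b i = -t ∨ b i = (Fintype.card ι - 1) * t := by
  have hterm : ∀ i ∈ univ, (b i + t) ^ 2 * (b i - (Fintype.card ι - 1) * t) ≤ 0 :=
    fun i _ => mul_nonpos_of_nonneg_of_nonpos (sq_nonneg _)
      (sub_nonpos.mpr (le_card_sub_one_mul_of_sum_eq_zero hsum ht hS i))
  rw [← sub_eq_zero, ← sum_sq_add_mul_sub_eq hsum hS, sum_eq_zero_iff_of_nonpos hterm]
  simp only [mem_univ, true_implies, mul_eq_zero, pow_eq_zero_iff two_ne_zero, sub_eq_zero,
    add_eq_zero_iff_eq_neg]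

end LinearOrderedField

theorem Real.div_sqrt_mul_mul_sq_rpow_three_halves (x : ℝ) {a t : ℝ} (ha : 0 ≤ a)
    (ht : 0 ≤ t) :
    x / √a * (a * t ^ 2) ^ ((3 : ℝ) / 2) = x * a * t ^ 3 := by
  have hpow : (a * t ^ 2) ^ ((3 : ℝ) / 2) = (√a * t) ^ 3 := by
    rw [← Real.sq_sqrt ha, ← mul_pow, ← Real.rpow_natCast_mul (by positivity), Real.sq_sqrt ha]
    norm_num
  calc x / √a * (a * t ^ 2) ^ ((3 : ℝ) / 2) = x * √a ^ 2 * t ^ 3 := by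
        rw [hpow]
        rcases eq_or_ne √a 0 with h | h
        · simp [h]
        · field_simp
    _ = x * a * t ^ 3 := by rw [Real.sq_sqrt ha]

theorem sum_pow_three_eq_okumura_bound_iff (hn : 2 ≤ Fintype.card ι) {b : ι → ℝ}
    (hsum : ∑ i, b i = 0) :
    ∑ i, b i ^ 3 = ((Fintype.card ι : ℝ) - 2) / √(Fintype.card ι * (Fintype.card ι - 1)) *
        (∑ i, b i ^ 2) ^ ((3 : ℝ) / 2) ↔
      ∃ j, ∃ c ≤ 0, ∀ i ≠ j, b i = c := by
  have : Nonempty ι := Fintype.card_pos_iff.mp (by omega)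
  have hn' : (2 : ℝ) ≤ Fintype.card ι := by exact_mod_cast hn
  set n : ℝ := (Fintype.card ι : ℝ)
  have hpos : 0 < n * (n - 1) := mul_pos (by linarith) (by linarith)
  set t := √((∑ i, b i ^ 2) / (n * (n - 1)))
  have ht : 0 ≤ t := Real.sqrt_nonneg _
  have hS : ∑ i, b i ^ 2 = n * (n - 1) * t ^ 2 := by
    rw [Real.sq_sqrt (by positivity), mul_div_cancel₀ _ hpos.ne']
  have hbound : (n - 2) / √(n * (n - 1)) * (∑ i, b i ^ 2) ^ ((3 : ℝ) / 2) =
      n * (n - 1) * (n - 2) * t ^ 3 := by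
    rw [hS, Real.div_sqrt_mul_mul_sq_rpow_three_halves _ hpos.le ht]
    ring
  rw [hbound, sum_pow_three_eq_iff hsum ht hS]
  constructor
  · intro hvalues
    obtain ⟨j, hj⟩ := exists_forall_ne_eq_zero_of_sum_eq (f := fun i => b i + t) (c := n * t)
      (fun i => (hvalues i).imp (by intro h; rw [h]; ring) (by intro h; rw [h]; ring))
      (by rw [sum_add_distrib, hsum, sum_const, card_univ, nsmul_eq_mul]; ring)
    exact ⟨j, -t, by linarith, fun i hi => by linarith [hj i hi]⟩
  · rintro ⟨j, c, hc, hbc⟩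
    have hbj : b j = -((n - 1) * c) := by
      have hsplit := Fintype.sum_eq_add_card_sub_one_mul b j hbc
      rw [hsum] at hsplit
      linear_combination -hsplit
    have htc : t = -c := by
      have hsq := Fintype.sum_eq_add_card_sub_one_mul (fun i => b i ^ 2) j
        (fun i hi => by rw [hbc i hi])
      rw [hS, hbj] at hsq
      have : t ^ 2 = (-c) ^ 2 := mul_left_cancel₀ hpos.ne' (by linear_combination hsq)
      exact (sq_eq_sq₀ ht (by linarith)).mp this
    intro i
    by_cases hi : i = j
    · right; rw [hi, hbj, htc]; ring
    · left; rw [hbc i hi, htc, neg_neg]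

end

/-- Equality characterization in Okumura's Lemma: for `b 1, ..., b m` summing to zero,
the upper (resp. lower) bound is attained iff `m - 1` of the `bᵢ`'s are non-positive
(resp. non-negative) and equal. -/
theorem okumura_lemma_equality (m : ℕ) (hm : 2 ≤ m) (b : Fin m → ℝ)
    (hsum : ∑ i, b i = 0) :
    ((∑ i, (b i) ^ 3 =
        (((m : ℝ) - 2) / Real.sqrt ((m : ℝ) * ((m : ℝ) - 1))) *
          (∑ i, (b i) ^ 2) ^ ((3 : ℝ) / 2)) ↔
      ∃ j : Fin m, ∃ c : ℝ, c ≤ 0 ∧ ∀ i : Fin m, i ≠ j → b i = c) ∧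
    ((∑ i, (b i) ^ 3 =
        -((((m : ℝ) - 2) / Real.sqrt ((m : ℝ) * ((m : ℝ) - 1))) *
          (∑ i, (b i) ^ 2) ^ ((3 : ℝ) / 2))) ↔
      ∃ j : Fin m, ∃ c : ℝ, 0 ≤ c ∧ ∀ i : Fin m, i ≠ j → b i = c) := by
  have key := fun (b : Fin m → ℝ) =>
    sum_pow_three_eq_okumura_bound_iff (by simpa using hm) (b := b)
  simp only [Fintype.card_fin] at key
  refine ⟨key b hsum, ?_⟩
  have hneg := key (-b) (by simp [hsum])
  simp only [Pi.neg_apply, Odd.neg_pow (by decide : Odd 3), even_two.neg_pow, sum_neg_distrib,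
    neg_eq_iff_eq_neg] at hneg
  rw [hneg]
  constructor <;> rintro ⟨j, c, hc, h⟩ <;>
    exact ⟨j, -c, by linarith, fun i hi => by linarith [h i hi]⟩
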